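/- For Banach lattices E (with dim E ≥ 1) and F (with dim F ≥ 1): every rank-one bounded operator T : E → F is order L-weakly compact if and only if F has order continuous norm (F = F^a). -/

import Mathlib

open Filter Topology

section Defs

/-- A pairwise disjoint sequence in a lattice-ordered group. -/
def DisjSeq {E : Type*} [Lattice E] [AddCommGroup E] (x : ℕ → E) : Prop :=
  ∀ m n : ℕ, m ≠ n → |x m| ⊓ |x n| = 0

/-- The solid hull of a set. -/
def SolidHull {E : Type*} [NormedAddCommGroup E] [Lattice E] [IsOrderedAddMonoid E] [HasSolidNorm E] (A : Set E) : Set E :=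
  {y | ∃ a ∈ A, |y| ≤ |a|}

/-- An L-weakly compact (Lwc) set: bounded, and every disjoint sequence in its
solid hull is norm null. -/
def IsLwcSet {E : Type*} [NormedAddCommGroup E] [Lattice E] [IsOrderedAddMonoid E] [HasSolidNorm E] (A : Set E) : Prop :=
  Bornology.IsBounded A ∧
    ∀ x : ℕ → E, (∀ n, x n ∈ SolidHull A) → DisjSeq x →
      Tendsto (fun n => ‖x n‖) atTop (𝓝 0)

/-- A relatively weakly compact subset of a normed space. -/
def RelWeaklyCompact {X : Type*} [NormedAddCommGroup X] [NormedSpace ℝ X] (A : Set X) : Prop :=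
  IsCompact (closure ((toWeakSpace ℝ X) '' A))

/-- Weak convergence of a sequence in a normed space. -/
def WeakTendsto {X : Type*} [NormedAddCommGroup X] [NormedSpace ℝ X] (x : ℕ → X) (a : X) : Prop :=
  ∀ φ : X →L[ℝ] ℝ, Tendsto (fun n => φ (x n)) atTop (𝓝 (φ a))

/-- A norm-bounded sequence. -/
def BddSeq {X : Type*} [NormedAddCommGroup X] (x : ℕ → X) : Prop :=
  ∃ M : ℝ, ∀ n, ‖x n‖ ≤ M

/-- Almost L-weakly compact operator: maps relatively weakly compact sets onto Lwc sets. -/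
def IsALwc {X F : Type*} [NormedAddCommGroup X] [NormedSpace ℝ X]
    [NormedAddCommGroup F] [Lattice F] [IsOrderedAddMonoid F] [HasSolidNorm F] [NormedSpace ℝ F] (T : X →L[ℝ] F) : Prop :=
  ∀ A : Set X, RelWeaklyCompact A → IsLwcSet (T '' A)

/-- M-weakly compact operator. -/
def IsMwc {E Y : Type*} [NormedAddCommGroup E] [Lattice E] [IsOrderedAddMonoid E] [HasSolidNorm E] [NormedSpace ℝ E]
    [NormedAddCommGroup Y] [NormedSpace ℝ Y] (T : E →L[ℝ] Y) : Prop :=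
  ∀ x : ℕ → E, DisjSeq x → BddSeq x → Tendsto (fun n => ‖T (x n)‖) atTop (𝓝 0)

/-- Almost M-weakly compact operator. -/
def IsAMwc {E Y : Type*} [NormedAddCommGroup E] [Lattice E] [IsOrderedAddMonoid E] [HasSolidNorm E] [NormedSpace ℝ E]
    [NormedAddCommGroup Y] [NormedSpace ℝ Y] (T : E →L[ℝ] Y) : Prop :=
  ∀ (f : ℕ → (Y →L[ℝ] ℝ)) (g : Y →L[ℝ] ℝ), WeakTendsto f g →
    ∀ x : ℕ → E, DisjSeq x → BddSeq x →
      Tendsto (fun n => f n (T (x n))) atTop (𝓝 0)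

/-- Order continuous norm (F = Fᵃ): every disjoint sequence in an order interval
[0, y] is norm null. -/
def HasOCN (F : Type*) [NormedAddCommGroup F] [Lattice F] [IsOrderedAddMonoid F] [HasSolidNorm F] : Prop :=
  ∀ y : F, 0 ≤ y → ∀ x : ℕ → F, (∀ n, x n ∈ Set.Icc (0 : F) y) → DisjSeq x →
    Tendsto (fun n => ‖x n‖) atTop (𝓝 0)

/-- Semi-compact operator. -/
def IsSemiCompact {E F : Type*} [NormedAddCommGroup E] [Lattice E] [IsOrderedAddMonoid E] [HasSolidNorm E] [NormedSpace ℝ E]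
    [NormedAddCommGroup F] [Lattice F] [IsOrderedAddMonoid F] [HasSolidNorm F] [NormedSpace ℝ F] (S : E →L[ℝ] F) : Prop :=
  ∀ ε : ℝ, 0 < ε → ∃ u : F, 0 ≤ u ∧
    ∀ x ∈ Metric.closedBall (0 : E) 1, ∃ w ∈ Set.Icc (-u) u, ‖S x - w‖ ≤ ε

/-- A positive functional on a Banach lattice. -/
def PosFunc {F : Type*} [NormedAddCommGroup F] [Lattice F] [IsOrderedAddMonoid F] [HasSolidNorm F] [NormedSpace ℝ F]
    (f : F →L[ℝ] ℝ) : Prop :=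
  ∀ y : F, 0 ≤ y → 0 ≤ f y

/-- The value of the modulus |f| of a functional at y (meaningful for 0 ≤ y). -/
noncomputable def absDual {F : Type*} [NormedAddCommGroup F] [Lattice F] [IsOrderedAddMonoid F] [HasSolidNorm F] [NormedSpace ℝ F]
    (f : F →L[ℝ] ℝ) (y : F) : ℝ :=
  sSup ((fun z => f z) '' {z : F | |z| ≤ y})

/-- Disjointness of two functionals: (|f| ⊓ |g|)(y) = 0 for all y ≥ 0, via the
Riesz–Kantorovich formula. -/
def DualDisjoint {F : Type*} [NormedAddCommGroup F] [Lattice F] [IsOrderedAddMonoid F] [HasSolidNorm F] [NormedSpace ℝ F]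
    (f g : F →L[ℝ] ℝ) : Prop :=
  ∀ y : F, 0 ≤ y →
    sInf {r : ℝ | ∃ z : F, 0 ≤ z ∧ z ≤ y ∧ r = absDual f z + absDual g (y - z)} = 0

/-- A pairwise disjoint sequence of functionals. -/
def DualDisjSeq {F : Type*} [NormedAddCommGroup F] [Lattice F] [IsOrderedAddMonoid F] [HasSolidNorm F] [NormedSpace ℝ F]
    (f : ℕ → (F →L[ℝ] ℝ)) : Prop :=
  ∀ m n : ℕ, m ≠ n → DualDisjoint (f m) (f n)

/-- A weak* null sequence of functionals. -/
def WeakStarNull {F : Type*} [NormedAddCommGroup F] [NormedSpace ℝ F]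
    (f : ℕ → (F →L[ℝ] ℝ)) : Prop :=
  ∀ y : F, Tendsto (fun n => f n y) atTop (𝓝 0)

/-- Almost limited operator: ‖T* fₙ‖ → 0 for every disjoint weak* null (fₙ) in F*. -/
def IsAlmostLimited {X F : Type*} [NormedAddCommGroup X] [NormedSpace ℝ X]
    [NormedAddCommGroup F] [Lattice F] [IsOrderedAddMonoid F] [HasSolidNorm F] [NormedSpace ℝ F] (T : X →L[ℝ] F) : Prop :=
  ∀ f : ℕ → (F →L[ℝ] ℝ), DualDisjSeq f → WeakStarNull f →
    Tendsto (fun n => ‖(f n).comp T‖) atTop (𝓝 0)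

/-- The canonical order on the dual: f ≤ g iff f y ≤ g y for all y ≥ 0. -/
def DualLE {F : Type*} [NormedAddCommGroup F] [Lattice F] [IsOrderedAddMonoid F] [HasSolidNorm F] [NormedSpace ℝ F]
    (f g : F →L[ℝ] ℝ) : Prop :=
  ∀ y : F, 0 ≤ y → f y ≤ g y

/-- The dual E* is a KB-space: every increasing norm-bounded sequence of positive
functionals is norm convergent. -/
def DualKB (E : Type*) [NormedAddCommGroup E] [Lattice E] [IsOrderedAddMonoid E] [HasSolidNorm E] [NormedSpace ℝ E] : Prop :=
  ∀ f : ℕ → (E →L[ℝ] ℝ), (∀ n, PosFunc (f n)) →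
    (∀ m n : ℕ, m ≤ n → DualLE (f m) (f n)) → (∃ M : ℝ, ∀ n, ‖f n‖ ≤ M) →
      ∃ g : E →L[ℝ] ℝ, Tendsto (fun n => ‖f n - g‖) atTop (𝓝 0)

/-- Positive operator. -/
def PosOp {E F : Type*} [NormedAddCommGroup E] [Lattice E] [IsOrderedAddMonoid E] [HasSolidNorm E] [NormedSpace ℝ E]
    [NormedAddCommGroup F] [Lattice F] [IsOrderedAddMonoid F] [HasSolidNorm F] [NormedSpace ℝ F] (T : E →L[ℝ] F) : Prop :=
  ∀ x : E, 0 ≤ x → 0 ≤ T x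

/-- Order bounded operator: maps order intervals into order intervals. -/
def OrderBoundedOp {E F : Type*} [NormedAddCommGroup E] [Lattice E] [IsOrderedAddMonoid E] [HasSolidNorm E] [NormedSpace ℝ E]
    [NormedAddCommGroup F] [Lattice F] [IsOrderedAddMonoid F] [HasSolidNorm F] [NormedSpace ℝ F] (T : E →L[ℝ] F) : Prop :=
  ∀ a b : E, ∃ c d : F, T '' Set.Icc a b ⊆ Set.Icc c d

/-- Order L-weakly compact operator: maps order bounded sets onto Lwc sets. -/
def IsOLwc {E F : Type*} [NormedAddCommGroup E] [Lattice E] [IsOrderedAddMonoid E] [HasSolidNorm E] [NormedSpace ℝ E]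
    [NormedAddCommGroup F] [Lattice F] [IsOrderedAddMonoid F] [HasSolidNorm F] [NormedSpace ℝ F] (T : E →L[ℝ] F) : Prop :=
  ∀ a b : E, IsLwcSet (T '' Set.Icc a b)

/-- Order M-weakly compact operator. -/
def IsOMwc {E F : Type*} [NormedAddCommGroup E] [Lattice E] [IsOrderedAddMonoid E] [HasSolidNorm E] [NormedSpace ℝ E]
    [NormedAddCommGroup F] [Lattice F] [IsOrderedAddMonoid F] [HasSolidNorm F] [NormedSpace ℝ F] (T : E →L[ℝ] F) : Prop :=
  ∀ f : ℕ → (F →L[ℝ] ℝ),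
    (∃ g h : F →L[ℝ] ℝ, ∀ n, DualLE g (f n) ∧ DualLE (f n) h) →
    ∀ x : ℕ → E, DisjSeq x → BddSeq x →
      Tendsto (fun n => f n (T (x n))) atTop (𝓝 0)

/-- Dunford–Pettis operator. -/
def IsDP {X Y : Type*} [NormedAddCommGroup X] [NormedSpace ℝ X]
    [NormedAddCommGroup Y] [NormedSpace ℝ Y] (T : X →L[ℝ] Y) : Prop :=
  ∀ x : ℕ → X, WeakTendsto x 0 → Tendsto (fun n => ‖T (x n)‖) atTop (𝓝 0)

/-- Weakly sequentially continuous lattice operations. -/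
def WSCLatticeOps (F : Type*) [NormedAddCommGroup F] [Lattice F] [IsOrderedAddMonoid F] [HasSolidNorm F] [NormedSpace ℝ F] : Prop :=
  ∀ x : ℕ → F, WeakTendsto x 0 → WeakTendsto (fun n => |x n|) 0

/-- Limitedly M-weakly compact operator: T xₙ → 0 weakly for each disjoint bounded (xₙ). -/
def IsLMwc {E Y : Type*} [NormedAddCommGroup E] [Lattice E] [IsOrderedAddMonoid E] [HasSolidNorm E] [NormedSpace ℝ E]
    [NormedAddCommGroup Y] [NormedSpace ℝ Y] (T : E →L[ℝ] Y) : Prop :=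
  ∀ x : ℕ → E, DisjSeq x → BddSeq x → WeakTendsto (fun n => T (x n)) 0

end Defs


/-!
Order continuity of the norm is exactly the statement that order intervals `[-w, w]` are
Lwc sets. A rank-one operator `z ↦ f z • y` maps an order interval `[a, b]` of `E` into
`[-w, w]` with `w = (‖f‖ * ‖|a| ⊔ |b|‖) • |y|`, so it is oLwc when `F = Fᵃ`. Conversely,
if `f e = 1` then `z ↦ f z • y` sends the singleton `[e, e]` to `{y}`, whose solid hull
contains `[0, y]`; so oLwc of this operator for every `y ≥ 0` is order continuity of the norm.
-/

section LatticeOrderedGroup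

variable {F : Type*} [Lattice F] [AddCommGroup F] [IsOrderedAddMonoid F]

lemma abs_le_sup_abs_of_mem_Icc {a b z : F} (hz : z ∈ Set.Icc a b) : |z| ≤ |a| ⊔ |b| :=
  abs_le'.2 ⟨hz.2.trans ((le_abs_self b).trans le_sup_right),
    (neg_le_neg hz.1).trans ((neg_le_abs a).trans le_sup_left)⟩

lemma inv_two_pow_smul_nonneg [Module ℝ F] {y : F} (hy : 0 ≤ y) (k : ℕ) :
    0 ≤ ((2 : ℝ) ^ k)⁻¹ • y := by
  induction k with
  | zero => simpa using hy
  | succ k ih =>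
    refine nsmul_two_semiclosed ?_
    rwa [two_nsmul, ← two_smul ℝ, smul_smul, pow_succ, mul_inv,
      mul_left_comm, mul_inv_cancel₀ two_ne_zero, mul_one]

end LatticeOrderedGroup

section NormedLattice

variable {F : Type*} [NormedAddCommGroup F] [Lattice F] [IsOrderedAddMonoid F] [HasSolidNorm F]
  [NormedSpace ℝ F]

/-- Approximate `c` by the dyadic rationals `⌊c 2ᵏ⌋ / 2ᵏ`; the positive cone is closed. -/
lemma smul_nonneg_of_hasSolidNorm {c : ℝ} (hc : 0 ≤ c) {y : F} (hy : 0 ≤ y) : 0 ≤ c • y := by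
  have hdyadic : Tendsto (fun k : ℕ => (⌊c * 2 ^ k⌋₊ : ℝ) / 2 ^ k) atTop (𝓝 c) :=
    (tendsto_nat_floor_mul_div_atTop hc).comp
      (tendsto_pow_atTop_atTop_of_one_lt one_lt_two)
  refine isClosed_nonneg.mem_of_tendsto (hdyadic.smul_const y) (Eventually.of_forall fun k => ?_)
  rw [div_eq_mul_inv, ← smul_smul, Nat.cast_smul_eq_nsmul]
  exact nsmul_nonneg (inv_two_pow_smul_nonneg hy k) _

instance HasSolidNorm.isOrderedModule : IsOrderedModule ℝ F :=
  .of_smul_nonneg fun _ hc _ hy => smul_nonneg_of_hasSolidNorm hc hy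

lemma abs_smul_le (c : ℝ) (y : F) : |c • y| ≤ |c| • |y| := by
  have key : ∀ c : ℝ, 0 ≤ c → |c • y| ≤ c • |y| := fun c hc =>
    abs_le'.2 ⟨smul_le_smul_of_nonneg_left (le_abs_self y) hc,
      by simpa only [smul_neg] using smul_le_smul_of_nonneg_left (neg_le_abs y) hc⟩
  rcases le_total 0 c with hc | hc
  · simpa only [abs_of_nonneg hc] using key c hc
  · simpa only [abs_of_nonpos hc, neg_smul, abs_neg] using key (-c) (neg_nonneg.2 hc)

end NormedLattice

section OrderContinuousNorm

variable {F : Type*} [NormedAddCommGroup F] [Lattice F] [IsOrderedAddMonoid F] [HasSolidNorm F]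

lemma HasOCN.isLwcSet_of_abs_le (hF : HasOCN F) {A : Set F} {w : F} (hA : ∀ a ∈ A, |a| ≤ w) :
    IsLwcSet A := by
  have hsolid : ∀ x ∈ SolidHull A, |x| ≤ w := fun x ⟨a, ha, hxa⟩ => hxa.trans (hA a ha)
  refine ⟨isBounded_iff_forall_norm_le.2 ⟨‖w‖, fun a ha => ?_⟩, fun x hx hdisj => ?_⟩
  · exact norm_le_norm_of_abs_le_abs ((hA a ha).trans (le_abs_self w))
  · have hw : 0 ≤ w := (abs_nonneg _).trans (hsolid _ (hx 0))
    have hdisj' : DisjSeq fun n => |x n| := fun m n hmn => by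
      simpa only [abs_abs] using hdisj m n hmn
    simpa only [norm_abs_eq_norm] using
      hF w hw (fun n => |x n|) (fun n => ⟨abs_nonneg _, hsolid _ (hx n)⟩) hdisj'

end OrderContinuousNorm

section RankOne

variable {E F : Type*}
  [NormedAddCommGroup E] [Lattice E] [IsOrderedAddMonoid E] [HasSolidNorm E] [NormedSpace ℝ E]
  [NormedAddCommGroup F] [Lattice F] [IsOrderedAddMonoid F] [HasSolidNorm F] [NormedSpace ℝ F]

lemma abs_smul_le_of_mem_Icc (f : E →L[ℝ] ℝ) (y : F) {a b z : E} (hz : z ∈ Set.Icc a b) :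
    |f z • y| ≤ (‖f‖ * ‖|a| ⊔ |b|‖) • |y| := by
  have hfz : |f z| ≤ ‖f‖ * ‖|a| ⊔ |b|‖ := calc
    |f z| ≤ ‖f‖ * ‖z‖ := f.le_opNorm z
    _ ≤ ‖f‖ * ‖|a| ⊔ |b|‖ := by
      gcongr
      exact norm_le_norm_of_abs_le_abs ((abs_le_sup_abs_of_mem_Icc hz).trans (le_abs_self _))
  exact (abs_smul_le _ _).trans (smul_le_smul_of_nonneg_right hfz (abs_nonneg y))

lemma HasOCN.isOLwc_of_eq_smul (hF : HasOCN F) {T : E →L[ℝ] F} {f : E →L[ℝ] ℝ} {y : F}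
    (hT : ∀ z, T z = f z • y) : IsOLwc T := by
  intro a b
  refine hF.isLwcSet_of_abs_le (w := (‖f‖ * ‖|a| ⊔ |b|‖) • |y|) ?_
  rintro _ ⟨z, hz, rfl⟩
  rw [hT]
  exact abs_smul_le_of_mem_Icc f y hz

lemma IsOLwc.tendsto_norm_of_disjSeq_Icc {T : E →L[ℝ] F} (hT : IsOLwc T) {e : E} {y : F}
    (he : T e = y) (hy : 0 ≤ y) {x : ℕ → F} (hx : ∀ n, x n ∈ Set.Icc 0 y) (hdisj : DisjSeq x) :
    Tendsto (fun n => ‖x n‖) atTop (𝓝 0) := by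
  refine (hT e e).2 x (fun n => ⟨y, ⟨e, Set.left_mem_Icc.2 le_rfl, he⟩, ?_⟩) hdisj
  rw [abs_of_nonneg hy, abs_of_nonneg (hx n).1]
  exact (hx n).2

end RankOne

theorem stmt_14_general {E F : Type*}
    [NormedAddCommGroup E] [Lattice E] [IsOrderedAddMonoid E] [HasSolidNorm E] [NormedSpace ℝ E]
    [NormedAddCommGroup F] [Lattice F] [IsOrderedAddMonoid F] [HasSolidNorm F] [NormedSpace ℝ F]
    (hE : ∃ x : E, x ≠ 0) :
    (∀ T : E →L[ℝ] F, (∃ (f : E →L[ℝ] ℝ) (y : F), ∀ z : E, T z = f z • y) →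
      IsOLwc T) ↔ HasOCN F := by
  refine ⟨fun hT y hy x hx hdisj => ?_, fun hF T ⟨f, y, hfy⟩ => hF.isOLwc_of_eq_smul hfy⟩
  obtain ⟨e, he⟩ := hE
  obtain ⟨f, hfe⟩ := SeparatingDual.exists_eq_one (R := ℝ) he
  exact (hT (f.smulRight y) ⟨f, y, fun _ => rfl⟩).tendsto_norm_of_disjSeq_Icc (e := e)
    (by simp [hfe]) hy hx hdisj

/-- For nontrivial Banach lattices E and F: every rank-one bounded operator
T : E → F is order L-weakly compact iff F has order continuous norm. -/
theorem stmt_14 {E F : Type*}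
    [NormedAddCommGroup E] [Lattice E] [IsOrderedAddMonoid E] [HasSolidNorm E] [NormedSpace ℝ E] [CompleteSpace E]
    [NormedAddCommGroup F] [Lattice F] [IsOrderedAddMonoid F] [HasSolidNorm F] [NormedSpace ℝ F] [CompleteSpace F]
    (hE : ∃ x : E, x ≠ 0) (hF : ∃ y : F, y ≠ 0) :
    (∀ T : E →L[ℝ] F, (∃ (f : E →L[ℝ] ℝ) (y : F), ∀ z : E, T z = f z • y) →
      IsOLwc T) ↔ HasOCN F :=
  stmt_14_general hE
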